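/- arXiv:0811.4365 — 7 statements merged into one kernel-verified Lean document; each statement's English description precedes it below -/
import Mathlib

section
/- In the group W given by Wajnryb's presentation of the genus-2 handlebody group, the equality d₋₁₁ = d₋₂₂ holds (relation (P3)' of the reduction). -/
/-!
Wajnryb's presentation of the genus-2 handlebody group, as a `PresentedGroup`
over the free group on 14 generators:
0 = a1, 1 = a2, 2 = d(-2,-1), 3 = d(-2,1), 4 = d(-2,2), 5 = d(-1,1),
6 = d(-1,2), 7 = d(1,2), 8 = o, 9 = o2, 10 = t, 11 = r, 12 = z, 13 = e.
-/

namespace Wajnryb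

abbrev F : Type := FreeGroup (Fin 14)

def A1 : F := FreeGroup.of 0
def A2 : F := FreeGroup.of 1
def Dm2m1 : F := FreeGroup.of 2
def Dm21 : F := FreeGroup.of 3
def Dm22 : F := FreeGroup.of 4
def Dm11 : F := FreeGroup.of 5
def Dm12 : F := FreeGroup.of 6
def D12 : F := FreeGroup.of 7
def O : F := FreeGroup.of 8
def O2 : F := FreeGroup.of 9
def T : F := FreeGroup.of 10
def R : F := FreeGroup.of 11
def Z : F := FreeGroup.of 12
def E : F := FreeGroup.of 13

/-- The defining relators (each relation `lhs = rhs` is encoded as `lhs * rhs⁻¹`). -/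
def rels : Set F :=
  { -- (D1)–(D7)
    O⁻¹ * T⁻¹ * O⁻¹ * D12 * (O * T * O) * Dm2m1⁻¹,
    T⁻¹ * O⁻¹ * D12 * (O * T) * Dm21⁻¹,
    O⁻¹ * D12 * O * Dm12⁻¹,
    (T⁻¹ * D12) * Dm11 * (T⁻¹ * D12)⁻¹ * Dm22⁻¹,
    O2 * ((T * D12⁻¹) * O * (T * D12⁻¹)⁻¹)⁻¹,
    Z * (A1⁻¹ * A2⁻¹ * O * T * O * D12)⁻¹,
    E * (O * Z * O⁻¹ * Z)⁻¹,
    -- (P1) commuting relations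
    A1 * A2 * (A2 * A1)⁻¹,
    A1 * Dm2m1 * (Dm2m1 * A1)⁻¹,
    A1 * Dm21 * (Dm21 * A1)⁻¹,
    A1 * Dm22 * (Dm22 * A1)⁻¹,
    A1 * Dm11 * (Dm11 * A1)⁻¹,
    A1 * Dm12 * (Dm12 * A1)⁻¹,
    A1 * D12 * (D12 * A1)⁻¹,
    A2 * Dm2m1 * (Dm2m1 * A2)⁻¹,
    A2 * Dm21 * (Dm21 * A2)⁻¹,
    A2 * Dm22 * (Dm22 * A2)⁻¹,
    A2 * Dm11 * (Dm11 * A2)⁻¹,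
    A2 * Dm12 * (Dm12 * A2)⁻¹,
    A2 * D12 * (D12 * A2)⁻¹,
    -- (P2.1)–(P2.11) pure braid relations
    Dm2m1⁻¹ * Dm21 * Dm2m1 * (Dm21 * Dm11 * Dm21 * Dm11⁻¹ * Dm21⁻¹)⁻¹,
    Dm2m1⁻¹ * Dm11 * Dm2m1 * (Dm21 * Dm11 * Dm21⁻¹)⁻¹,
    Dm2m1⁻¹ * Dm22 * Dm2m1 * (Dm22 * Dm12 * Dm22 * Dm12⁻¹ * Dm22⁻¹)⁻¹,
    Dm21⁻¹ * Dm22 * Dm21 * (Dm22 * D12 * Dm22 * D12⁻¹ * Dm22⁻¹)⁻¹,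
    Dm11⁻¹ * Dm22 * Dm11 * Dm22⁻¹,
    Dm2m1⁻¹ * Dm12 * Dm2m1 * (Dm22 * Dm12 * Dm22⁻¹)⁻¹,
    Dm21⁻¹ * Dm12 * Dm21 *
      (Dm22 * D12 * Dm22⁻¹ * D12⁻¹ * Dm12 * D12 * Dm22 * D12⁻¹ * Dm22⁻¹)⁻¹,
    Dm11⁻¹ * Dm12 * Dm11 * (Dm12 * D12 * Dm12 * D12⁻¹ * Dm12⁻¹)⁻¹,
    Dm2m1⁻¹ * D12 * Dm2m1 * D12⁻¹,
    Dm21⁻¹ * D12 * Dm21 * (Dm22 * D12 * Dm22⁻¹)⁻¹,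
    Dm11⁻¹ * D12 * Dm11 * (Dm12 * D12 * Dm12⁻¹)⁻¹,
    -- (P3)
    Dm2m1 * Dm21 * Dm12 * Dm22 * Dm11 * Dm12 * D12 * (A1 ^ 4 * A2 ^ 4)⁻¹,
    -- (P4.1)–(P4.4)
    Dm11 * Dm12 * D12 * (A1 ^ 2 * A2 ^ 2)⁻¹,
    Dm21 * Dm22 * D12 * (A1 ^ 2 * A2 ^ 2)⁻¹,
    Dm2m1 * Dm22 * Dm12 * (A1 ^ 2 * A2 ^ 2)⁻¹,
    Dm2m1 * Dm21 * Dm11 * (A1 ^ 2 * A2 ^ 2)⁻¹,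
    -- (P6)
    O ^ 2 * Dm11⁻¹,
    T ^ 2 * (D12 * Dm2m1 * (A1 ^ 2)⁻¹ * (A2 ^ 2)⁻¹)⁻¹,
    -- (P7)
    T * A1 * T⁻¹ * A2⁻¹,
    O * A1 * (A1 * O)⁻¹,
    O * A2 * (A2 * O)⁻¹,
    -- (P8)
    T * D12 * (D12 * T)⁻¹,
    O * T * O * T * (T * O * T * O)⁻¹,
    O * Dm22 * (Dm22 * O)⁻¹,
    -- (P9)
    R ^ 2 * ((A2 ^ 4)⁻¹ * O2 * D12 * O2 * D12⁻¹)⁻¹,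
    -- (P10 a)
    R * A2 * R⁻¹ * D12⁻¹,
    R * A1 * (A1 * R)⁻¹,
    -- (P10 e)
    R * E * (E * R)⁻¹,
    -- (P10 f)
    R * D12 * R⁻¹ * A2⁻¹,
    -- (P10 g)
    R * Dm2m1 * R⁻¹ * (Dm11 * Dm12 * D12 * (A1 ^ 2)⁻¹ * A2⁻¹)⁻¹,
    -- (P11)
    R * T * R * (T * R * T)⁻¹ }

/-- The group given by Wajnryb's presentation of the genus-2 handlebody group. -/
abbrev W : Type := PresentedGroup rels

def a1 : W := PresentedGroup.of 0
def a2 : W := PresentedGroup.of 1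
def dm2m1 : W := PresentedGroup.of 2
def dm21 : W := PresentedGroup.of 3
def dm22 : W := PresentedGroup.of 4
def dm11 : W := PresentedGroup.of 5
def dm12 : W := PresentedGroup.of 6
def d12 : W := PresentedGroup.of 7
def o : W := PresentedGroup.of 8
def o2 : W := PresentedGroup.of 9
def t : W := PresentedGroup.of 10
def r : W := PresentedGroup.of 11
def z : W := PresentedGroup.of 12
def e : W := PresentedGroup.of 13

end Wajnryb


namespace Wajnryb

private def mkW : F →* W := PresentedGroup.mk rels

private lemma relW {x : F} (h : x ∈ rels) : mkW x = 1 :=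
  (QuotientGroup.eq_one_iff _).mpr (Subgroup.subset_normalClosure h)

private lemma gA1 : mkW A1 = a1 := rfl
private lemma gA2 : mkW A2 = a2 := rfl
private lemma gDm2m1 : mkW Dm2m1 = dm2m1 := rfl
private lemma gDm21 : mkW Dm21 = dm21 := rfl
private lemma gDm22 : mkW Dm22 = dm22 := rfl
private lemma gDm11 : mkW Dm11 = dm11 := rfl
private lemma gDm12 : mkW Dm12 = dm12 := rfl
private lemma gD12 : mkW D12 = d12 := rfl
private lemma gO : mkW O = o := rfl
private lemma gT : mkW T = t := rfl

end Wajnryb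

open Wajnryb in
/-- Relation (P3)' of the reduction: in Wajnryb's presentation of the genus-2
handlebody group, `d₋₁₁ = d₋₂₂`. -/
theorem Wajnryb.dm11_eq_dm22 : Wajnryb.dm11 = Wajnryb.dm22 := by
  -- extract the needed defining relations
  have e1 : t⁻¹ * o⁻¹ * d12 * (o * t) = dm21 := by
    have h := relW (x := T⁻¹ * O⁻¹ * D12 * (O * T) * Dm21⁻¹)
      (by unfold rels; repeat first
            | exact Set.mem_insert _ _
            | apply Set.mem_insert_of_mem
            | exact Set.mem_singleton _)
    simp only [map_mul, map_inv, map_pow, gA1, gA2, gDm2m1, gDm21, gDm22, gDm11,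
      gDm12, gD12, gO, gT, mul_inv_eq_one] at h
    exact h
  have e2 : o⁻¹ * d12 * o = dm12 := by
    have h := relW (x := O⁻¹ * D12 * O * Dm12⁻¹)
      (by unfold rels; repeat first
            | exact Set.mem_insert _ _
            | apply Set.mem_insert_of_mem
            | exact Set.mem_singleton _)
    simp only [map_mul, map_inv, map_pow, gA1, gA2, gDm2m1, gDm21, gDm22, gDm11,
      gDm12, gD12, gO, gT, mul_inv_eq_one] at h
    exact h
  have e3 : dm2m1 * dm21 * dm12 * dm22 * dm11 * dm12 * d12 = a1 ^ 4 * a2 ^ 4 := by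
    have h := relW (x := Dm2m1 * Dm21 * Dm12 * Dm22 * Dm11 * Dm12 * D12 * (A1 ^ 4 * A2 ^ 4)⁻¹)
      (by unfold rels; repeat first
            | exact Set.mem_insert _ _
            | apply Set.mem_insert_of_mem
            | exact Set.mem_singleton _)
    simp only [map_mul, map_inv, map_pow, gA1, gA2, gDm2m1, gDm21, gDm22, gDm11,
      gDm12, gD12, gO, gT, mul_inv_eq_one] at h
    exact h
  have e4 : dm11 * dm12 * d12 = a1 ^ 2 * a2 ^ 2 := by
    have h := relW (x := Dm11 * Dm12 * D12 * (A1 ^ 2 * A2 ^ 2)⁻¹)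
      (by unfold rels; repeat first
            | exact Set.mem_insert _ _
            | apply Set.mem_insert_of_mem
            | exact Set.mem_singleton _)
    simp only [map_mul, map_inv, map_pow, gA1, gA2, gDm2m1, gDm21, gDm22, gDm11,
      gDm12, gD12, gO, gT, mul_inv_eq_one] at h
    exact h
  have e5 : dm21 * dm22 * d12 = a1 ^ 2 * a2 ^ 2 := by
    have h := relW (x := Dm21 * Dm22 * D12 * (A1 ^ 2 * A2 ^ 2)⁻¹)
      (by unfold rels; repeat first
            | exact Set.mem_insert _ _
            | apply Set.mem_insert_of_mem
            | exact Set.mem_singleton _)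
    simp only [map_mul, map_inv, map_pow, gA1, gA2, gDm2m1, gDm21, gDm22, gDm11,
      gDm12, gD12, gO, gT, mul_inv_eq_one] at h
    exact h
  have e6 : dm2m1 * dm21 * dm11 = a1 ^ 2 * a2 ^ 2 := by
    have h := relW (x := Dm2m1 * Dm21 * Dm11 * (A1 ^ 2 * A2 ^ 2)⁻¹)
      (by unfold rels; repeat first
            | exact Set.mem_insert _ _
            | apply Set.mem_insert_of_mem
            | exact Set.mem_singleton _)
    simp only [map_mul, map_inv, map_pow, gA1, gA2, gDm2m1, gDm21, gDm22, gDm11,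
      gDm12, gD12, gO, gT, mul_inv_eq_one] at h
    exact h
  have e7 : dm11⁻¹ * dm22 * dm11 = dm22 := by
    have h := relW (x := Dm11⁻¹ * Dm22 * Dm11 * Dm22⁻¹)
      (by unfold rels; repeat first
            | exact Set.mem_insert _ _
            | apply Set.mem_insert_of_mem
            | exact Set.mem_singleton _)
    simp only [map_mul, map_inv, map_pow, gA1, gA2, gDm2m1, gDm21, gDm22, gDm11,
      gDm12, gD12, gO, gT, mul_inv_eq_one] at h
    exact h
  have e8 : o ^ 2 = dm11 := by
    have h := relW (x := O ^ 2 * Dm11⁻¹)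
      (by unfold rels; repeat first
            | exact Set.mem_insert _ _
            | apply Set.mem_insert_of_mem
            | exact Set.mem_singleton _)
    simp only [map_mul, map_inv, map_pow, gA1, gA2, gDm2m1, gDm21, gDm22, gDm11,
      gDm12, gD12, gO, gT, mul_inv_eq_one] at h
    exact h
  have e9 : o * dm22 = dm22 * o := by
    have h := relW (x := O * Dm22 * (Dm22 * O)⁻¹)
      (by unfold rels; repeat first
            | exact Set.mem_insert _ _
            | apply Set.mem_insert_of_mem
            | exact Set.mem_singleton _)
    simp only [map_mul, map_inv, map_pow, gA1, gA2, gDm2m1, gDm21, gDm22, gDm11,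
      gDm12, gD12, gO, gT, mul_inv_eq_one] at h
    exact h
  have e10 : t * d12 = d12 * t := by
    have h := relW (x := T * D12 * (D12 * T)⁻¹)
      (by unfold rels; repeat first
            | exact Set.mem_insert _ _
            | apply Set.mem_insert_of_mem
            | exact Set.mem_singleton _)
    simp only [map_mul, map_inv, map_pow, gA1, gA2, gDm2m1, gDm21, gDm22, gDm11,
      gDm12, gD12, gO, gT, mul_inv_eq_one] at h
    exact h
  have e11 : a1 * a2 = a2 * a1 := by
    have h := relW (x := A1 * A2 * (A2 * A1)⁻¹)
      (by unfold rels; repeat first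
            | exact Set.mem_insert _ _
            | apply Set.mem_insert_of_mem
            | exact Set.mem_singleton _)
    simp only [map_mul, map_inv, map_pow, gA1, gA2, gDm2m1, gDm21, gDm22, gDm11,
      gDm12, gD12, gO, gT, mul_inv_eq_one] at h
    exact h
  -- now the pure group-theoretic derivation
  have hc : Commute (a1 ^ 2) (a2 ^ 2) := (show Commute a1 a2 from e11).pow_pow 2 2
  have hA : a1 ^ 4 * a2 ^ 4 = a1 ^ 2 * a2 ^ 2 * (a1 ^ 2 * a2 ^ 2) := by
    calc a1 ^ 4 * a2 ^ 4 = a1 ^ 2 * (a1 ^ 2 * a2 ^ 2) * a2 ^ 2 := by group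
      _ = a1 ^ 2 * (a2 ^ 2 * a1 ^ 2) * a2 ^ 2 := by rw [hc.eq]
      _ = a1 ^ 2 * a2 ^ 2 * (a1 ^ 2 * a2 ^ 2) := by group
  have h6' : dm2m1 * dm21 = a1 ^ 2 * a2 ^ 2 * dm11⁻¹ := by
    calc dm2m1 * dm21 = dm2m1 * dm21 * dm11 * dm11⁻¹ := by group
      _ = a1 ^ 2 * a2 ^ 2 * dm11⁻¹ := by rw [e6]
  have h4' : dm12 * d12 = dm11⁻¹ * (a1 ^ 2 * a2 ^ 2) := by
    calc dm12 * d12 = dm11⁻¹ * (dm11 * dm12 * d12) := by group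
      _ = dm11⁻¹ * (a1 ^ 2 * a2 ^ 2) := by rw [e4]
  have key : a1 ^ 2 * a2 ^ 2 * (dm11⁻¹ * (dm12 * dm22)) * (a1 ^ 2 * a2 ^ 2) =
      a1 ^ 2 * a2 ^ 2 * (a1 ^ 2 * a2 ^ 2) := by
    calc a1 ^ 2 * a2 ^ 2 * (dm11⁻¹ * (dm12 * dm22)) * (a1 ^ 2 * a2 ^ 2)
        = (a1 ^ 2 * a2 ^ 2 * dm11⁻¹) * (dm12 * dm22 * dm11) *
            (dm11⁻¹ * (a1 ^ 2 * a2 ^ 2)) := by group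
      _ = (dm2m1 * dm21) * (dm12 * dm22 * dm11) * (dm12 * d12) := by rw [h6', h4']
      _ = dm2m1 * dm21 * dm12 * dm22 * dm11 * dm12 * d12 := by group
      _ = a1 ^ 4 * a2 ^ 4 := e3
      _ = a1 ^ 2 * a2 ^ 2 * (a1 ^ 2 * a2 ^ 2) := hA
  have h3 : dm11⁻¹ * (dm12 * dm22) = 1 := by
    have := mul_right_cancel key
    exact mul_left_cancel this
  have c1 : dm12 * dm22 = dm11 := (inv_mul_eq_one.mp h3).symm
  have cd : dm12 = dm11 * dm22⁻¹ := by
    calc dm12 = dm12 * dm22 * dm22⁻¹ := by group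
      _ = dm11 * dm22⁻¹ := by rw [c1]
  have e9' : o * dm22⁻¹ = dm22⁻¹ * o := ((show Commute o dm22 from e9).inv_right).eq
  have hd : d12 = o * dm12 * o⁻¹ := by
    rw [← e2]; group
  have c5 : d12 = dm12 := by
    calc d12 = o * dm12 * o⁻¹ := hd
      _ = o * (dm11 * dm22⁻¹) * o⁻¹ := by rw [cd]
      _ = o * (o ^ 2 * dm22⁻¹) * o⁻¹ := by rw [e8]
      _ = o ^ 2 * (o * dm22⁻¹) * o⁻¹ := by group
      _ = o ^ 2 * (dm22⁻¹ * o) * o⁻¹ := by rw [e9']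
      _ = o ^ 2 * dm22⁻¹ := by group
      _ = dm11 * dm22⁻¹ := by rw [e8]
      _ = dm12 := cd.symm
  have c6 : dm21 = d12 := by
    calc dm21 = t⁻¹ * o⁻¹ * d12 * (o * t) := e1.symm
      _ = t⁻¹ * (o⁻¹ * d12 * o) * t := by group
      _ = t⁻¹ * dm12 * t := by rw [e2]
      _ = t⁻¹ * d12 * t := by rw [← c5]
      _ = t⁻¹ * (d12 * t) := by group
      _ = t⁻¹ * (t * d12) := by rw [← e10]
      _ = d12 := by group
  have h45 : dm11 * dm12 = dm21 * dm22 := by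
    have h := e4.trans e5.symm
    exact mul_right_cancel h
  have hfin : dm12 * dm22 * dm12 = dm12 * dm22 := by
    calc dm12 * dm22 * dm12 = dm11 * dm12 := by rw [c1]
      _ = dm21 * dm22 := h45
      _ = d12 * dm22 := by rw [c6]
      _ = dm12 * dm22 := by rw [c5]
  have h12 : dm12 = 1 := by
    have h' : dm12 * dm22 * dm12 = dm12 * dm22 * 1 := by rw [mul_one]; exact hfin
    exact mul_left_cancel h'
  calc dm11 = dm12 * dm22 := c1.symm
    _ = 1 * dm22 := by rw [h12]
    _ = dm22 := one_mul _
end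

section
/- In the group W given by Wajnryb's presentation of the genus-2 handlebody group, the element oto commutes with d₁₂, i.e. (oto)d₁₂ = d₁₂(oto) (relation (D1)' of the reduction). -/
/-!
Wajnryb's presentation of the genus-2 handlebody group, as a `PresentedGroup`
over the free group on 14 generators:
0 = a1, 1 = a2, 2 = d(-2,-1), 3 = d(-2,1), 4 = d(-2,2), 5 = d(-1,1),
6 = d(-1,2), 7 = d(1,2), 8 = o, 9 = o2, 10 = t, 11 = r, 12 = z, 13 = e.
-/

namespace Wajnryb

/-- The quotient map from the free group to `W`. -/
def mk : F →* W := QuotientGroup.mk' (Subgroup.normalClosure rels)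

lemma mk_rel {x : F} (h : x ∈ rels) : mk x = 1 := by
  have hx : x ∈ Subgroup.normalClosure rels := Subgroup.subset_normalClosure h
  show (QuotientGroup.mk x : W) = 1
  rwa [QuotientGroup.eq_one_iff]

lemma mk_A1 : mk A1 = a1 := rfl
lemma mk_A2 : mk A2 = a2 := rfl
lemma mk_Dm2m1 : mk Dm2m1 = dm2m1 := rfl
lemma mk_Dm11 : mk Dm11 = dm11 := rfl
lemma mk_Dm12 : mk Dm12 = dm12 := rfl
lemma mk_D12 : mk D12 = d12 := rfl
lemma mk_O : mk O = o := rfl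
lemma mk_T : mk T = t := rfl
lemma mk_R : mk R = r := rfl

lemma rel_D1 : o⁻¹ * t⁻¹ * o⁻¹ * d12 * (o * t * o) * dm2m1⁻¹ = 1 := by
  have h := mk_rel (x := O⁻¹ * T⁻¹ * O⁻¹ * D12 * (O * T * O) * Dm2m1⁻¹)
    (Set.mem_insert _ _)
  simpa only [map_mul, map_inv, mk_O, mk_T, mk_D12, mk_Dm2m1] using h

lemma rel_a1a2 : a1 * a2 * (a2 * a1)⁻¹ = 1 := by
  have h := mk_rel (x := A1 * A2 * (A2 * A1)⁻¹) (by
    unfold rels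
    iterate 7 apply Set.mem_insert_of_mem
    exact Set.mem_insert _ _)
  simpa only [map_mul, map_inv, mk_A1, mk_A2] using h

lemma rel_P41 : dm11 * dm12 * d12 * (a1 ^ 2 * a2 ^ 2)⁻¹ = 1 := by
  have h := mk_rel (x := Dm11 * Dm12 * D12 * (A1 ^ 2 * A2 ^ 2)⁻¹) (by
    unfold rels
    iterate 32 apply Set.mem_insert_of_mem
    exact Set.mem_insert _ _)
  simpa only [map_mul, map_inv, map_pow, mk_A1, mk_A2, mk_Dm11, mk_Dm12, mk_D12] using h

lemma rel_P10f : r * d12 * r⁻¹ * a2⁻¹ = 1 := by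
  have h := mk_rel (x := R * D12 * R⁻¹ * A2⁻¹) (by
    unfold rels
    iterate 48 apply Set.mem_insert_of_mem
    exact Set.mem_insert _ _)
  simpa only [map_mul, map_inv, mk_R, mk_D12, mk_A2] using h

lemma rel_P10g : r * dm2m1 * r⁻¹ * (dm11 * dm12 * d12 * (a1 ^ 2)⁻¹ * a2⁻¹)⁻¹ = 1 := by
  have h := mk_rel (x := R * Dm2m1 * R⁻¹ * (Dm11 * Dm12 * D12 * (A1 ^ 2)⁻¹ * A2⁻¹)⁻¹) (by
    unfold rels
    iterate 49 apply Set.mem_insert_of_mem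
    exact Set.mem_insert _ _)
  simpa only [map_mul, map_inv, map_pow, mk_R, mk_Dm2m1, mk_Dm11, mk_Dm12, mk_D12,
    mk_A1, mk_A2] using h

lemma dm2m1_eq_d12 : dm2m1 = d12 := by
  have hcomm : a1 * a2 = a2 * a1 := by
    have := rel_a1a2; rwa [mul_inv_eq_one] at this
  have h41 : dm11 * dm12 * d12 = a1 ^ 2 * a2 ^ 2 := by
    have := rel_P41
    rwa [mul_inv_eq_one] at this
  have hg : r * dm2m1 * r⁻¹ = dm11 * dm12 * d12 * (a1 ^ 2)⁻¹ * a2⁻¹ := by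
    have := rel_P10g
    rwa [mul_inv_eq_one] at this
  have hf : r * d12 * r⁻¹ = a2 := by
    have := rel_P10f
    rwa [mul_inv_eq_one] at this
  have ha : a1 ^ 2 * a2 ^ 2 = a2 ^ 2 * a1 ^ 2 := by
    have hc : Commute a1 a2 := hcomm
    exact (hc.pow_pow 2 2).eq
  have hg' : r * dm2m1 * r⁻¹ = a2 := by
    rw [hg, h41, ha]
    group
  have : r * dm2m1 * r⁻¹ = r * d12 * r⁻¹ := by rw [hg', hf]
  have := mul_right_cancel this
  exact mul_left_cancel this

end Wajnryb

/-- Relation (D1)' of the reduction: in Wajnryb's presentation of the genus-2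
handlebody group, the element `oto` commutes with `d₁₂`. -/
theorem Wajnryb.oto_comm_d12 :
    (Wajnryb.o * Wajnryb.t * Wajnryb.o) * Wajnryb.d12
      = Wajnryb.d12 * (Wajnryb.o * Wajnryb.t * Wajnryb.o) := by
  have h := Wajnryb.rel_D1
  rw [mul_inv_eq_one] at h
  calc (Wajnryb.o * Wajnryb.t * Wajnryb.o) * Wajnryb.d12
      = (Wajnryb.o * Wajnryb.t * Wajnryb.o) * Wajnryb.d12 := rfl
    _ = Wajnryb.d12 * (Wajnryb.o * Wajnryb.t * Wajnryb.o) := by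
        have hd : Wajnryb.d12 * (Wajnryb.o * Wajnryb.t * Wajnryb.o)
            = (Wajnryb.o * Wajnryb.t * Wajnryb.o) * Wajnryb.dm2m1 := by
          have := congrArg (fun x => (Wajnryb.o * Wajnryb.t * Wajnryb.o) * x) h
          simpa [mul_assoc] using this
        rw [hd, Wajnryb.dm2m1_eq_d12]
end

section
/- In the group W given by Wajnryb's presentation of the genus-2 handlebody group, the equality r² = d₁₂⁻²a₁²a₂⁻² holds (the rewritten relation (P9)' of the reduction). -/
namespace Wajnryb

private lemma mkrel {w : F} (h : w ∈ rels) : PresentedGroup.mk rels w = 1 :=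
  (QuotientGroup.eq_one_iff w).2 (Subgroup.subset_normalClosure h)

private lemma mem2 : O⁻¹ * D12 * O * Dm12⁻¹ ∈ rels := by
  unfold rels; exact Set.mem_insert_of_mem _ (Set.mem_insert_of_mem _ (Set.mem_insert _ _))

private lemma hD3 : o⁻¹ * d12 * o * dm12⁻¹ = (1 : W) := mkrel mem2

private lemma mem4 : O2 * ((T * D12⁻¹) * O * (T * D12⁻¹)⁻¹)⁻¹ ∈ rels := by
  unfold rels; exact Set.mem_insert_of_mem _ (Set.mem_insert_of_mem _ (Set.mem_insert_of_mem _ (Set.mem_insert_of_mem _ (Set.mem_insert _ _))))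

private lemma hD5 : o2 * ((t * d12⁻¹) * o * (t * d12⁻¹)⁻¹)⁻¹ = (1 : W) := mkrel mem4

private lemma mem7 : A1 * A2 * (A2 * A1)⁻¹ ∈ rels := by
  unfold rels; exact Set.mem_insert_of_mem _ (Set.mem_insert_of_mem _ (Set.mem_insert_of_mem _ (Set.mem_insert_of_mem _ (Set.mem_insert_of_mem _ (Set.mem_insert_of_mem _ (Set.mem_insert_of_mem _ (Set.mem_insert _ _)))))))

private lemma hA12 : a1 * a2 * (a2 * a1)⁻¹ = (1 : W) := mkrel mem7

private lemma mem8 : A1 * Dm2m1 * (Dm2m1 * A1)⁻¹ ∈ rels := by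
  unfold rels; exact Set.mem_insert_of_mem _ (Set.mem_insert_of_mem _ (Set.mem_insert_of_mem _ (Set.mem_insert_of_mem _ (Set.mem_insert_of_mem _ (Set.mem_insert_of_mem _ (Set.mem_insert_of_mem _ (Set.mem_insert_of_mem _ (Set.mem_insert _ _))))))))

private lemma hA1Dm : a1 * dm2m1 * (dm2m1 * a1)⁻¹ = (1 : W) := mkrel mem8

private lemma mem13 : A1 * D12 * (D12 * A1)⁻¹ ∈ rels := by
  unfold rels; exact Set.mem_insert_of_mem _ (Set.mem_insert_of_mem _ (Set.mem_insert_of_mem _ (Set.mem_insert_of_mem _ (Set.mem_insert_of_mem _ (Set.mem_insert_of_mem _ (Set.mem_insert_of_mem _ (Set.mem_insert_of_mem _ (Set.mem_insert_of_mem _ (Set.mem_insert_of_mem _ (Set.mem_insert_of_mem _ (Set.mem_insert_of_mem _ (Set.mem_insert_of_mem _ (Set.mem_insert _ _)))))))))))))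

private lemma hA1D : a1 * d12 * (d12 * a1)⁻¹ = (1 : W) := mkrel mem13

private lemma mem14 : A2 * Dm2m1 * (Dm2m1 * A2)⁻¹ ∈ rels := by
  unfold rels; exact Set.mem_insert_of_mem _ (Set.mem_insert_of_mem _ (Set.mem_insert_of_mem _ (Set.mem_insert_of_mem _ (Set.mem_insert_of_mem _ (Set.mem_insert_of_mem _ (Set.mem_insert_of_mem _ (Set.mem_insert_of_mem _ (Set.mem_insert_of_mem _ (Set.mem_insert_of_mem _ (Set.mem_insert_of_mem _ (Set.mem_insert_of_mem _ (Set.mem_insert_of_mem _ (Set.mem_insert_of_mem _ (Set.mem_insert _ _))))))))))))))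

private lemma hA2Dm : a2 * dm2m1 * (dm2m1 * a2)⁻¹ = (1 : W) := mkrel mem14

private lemma mem19 : A2 * D12 * (D12 * A2)⁻¹ ∈ rels := by
  unfold rels; exact Set.mem_insert_of_mem _ (Set.mem_insert_of_mem _ (Set.mem_insert_of_mem _ (Set.mem_insert_of_mem _ (Set.mem_insert_of_mem _ (Set.mem_insert_of_mem _ (Set.mem_insert_of_mem _ (Set.mem_insert_of_mem _ (Set.mem_insert_of_mem _ (Set.mem_insert_of_mem _ (Set.mem_insert_of_mem _ (Set.mem_insert_of_mem _ (Set.mem_insert_of_mem _ (Set.mem_insert_of_mem _ (Set.mem_insert_of_mem _ (Set.mem_insert_of_mem _ (Set.mem_insert_of_mem _ (Set.mem_insert_of_mem _ (Set.mem_insert_of_mem _ (Set.mem_insert _ _)))))))))))))))))))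

private lemma hA2D : a2 * d12 * (d12 * a2)⁻¹ = (1 : W) := mkrel mem19

private lemma mem32 : Dm11 * Dm12 * D12 * (A1 ^ 2 * A2 ^ 2)⁻¹ ∈ rels := by
  unfold rels; exact Set.mem_insert_of_mem _ (Set.mem_insert_of_mem _ (Set.mem_insert_of_mem _ (Set.mem_insert_of_mem _ (Set.mem_insert_of_mem _ (Set.mem_insert_of_mem _ (Set.mem_insert_of_mem _ (Set.mem_insert_of_mem _ (Set.mem_insert_of_mem _ (Set.mem_insert_of_mem _ (Set.mem_insert_of_mem _ (Set.mem_insert_of_mem _ (Set.mem_insert_of_mem _ (Set.mem_insert_of_mem _ (Set.mem_insert_of_mem _ (Set.mem_insert_of_mem _ (Set.mem_insert_of_mem _ (Set.mem_insert_of_mem _ (Set.mem_insert_of_mem _ (Set.mem_insert_of_mem _ (Set.mem_insert_of_mem _ (Set.mem_insert_of_mem _ (Set.mem_insert_of_mem _ (Set.mem_insert_of_mem _ (Set.mem_insert_of_mem _ (Set.mem_insert_of_mem _ (Set.mem_insert_of_mem _ (Set.mem_insert_of_mem _ (Set.mem_insert_of_mem _ (Set.mem_insert_of_mem _ (Set.mem_insert_of_mem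 _ (Set.mem_insert_of_mem _ (Set.mem_insert _ _))))))))))))))))))))))))))))))))

private lemma hP41 : dm11 * dm12 * d12 * (a1 ^ 2 * a2 ^ 2)⁻¹ = (1 : W) := mkrel mem32

private lemma mem36 : O ^ 2 * Dm11⁻¹ ∈ rels := by
  unfold rels; exact Set.mem_insert_of_mem _ (Set.mem_insert_of_mem _ (Set.mem_insert_of_mem _ (Set.mem_insert_of_mem _ (Set.mem_insert_of_mem _ (Set.mem_insert_of_mem _ (Set.mem_insert_of_mem _ (Set.mem_insert_of_mem _ (Set.mem_insert_of_mem _ (Set.mem_insert_of_mem _ (Set.mem_insert_of_mem _ (Set.mem_insert_of_mem _ (Set.mem_insert_of_mem _ (Set.mem_insert_of_mem _ (Set.mem_insert_of_mem _ (Set.mem_insert_of_mem _ (Set.mem_insert_of_mem _ (Set.mem_insert_of_mem _ (Set.mem_insert_of_mem _ (Set.mem_insert_of_mem _ (Set.mem_insert_of_mem _ (Set.mem_insert_of_mem _ (Set.mem_insert_of_mem _ (Set.mem_insert_of_mem _ (Set.mem_insert_of_mem _ (Set.mem_insert_of_mem _ (Set.mem_insert_of_mem _ (Set.mem_insert_of_mem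 _ (Set.mem_insert_of_mem _ (Set.mem_insert_of_mem _ (Set.mem_insert_of_mem _ (Set.mem_insert_of_mem _ (Set.mem_insert_of_mem _ (Set.mem_insert_of_mem _ (Set.mem_insert_of_mem _ (Set.mem_insert_of_mem _ (Set.mem_insert _ _))))))))))))))))))))))))))))))))))))

private lemma hOsq : o ^ 2 * dm11⁻¹ = (1 : W) := mkrel mem36

private lemma mem37 : T ^ 2 * (D12 * Dm2m1 * (A1 ^ 2)⁻¹ * (A2 ^ 2)⁻¹)⁻¹ ∈ rels := by
  unfold rels; exact Set.mem_insert_of_mem _ (Set.mem_insert_of_mem _ (Set.mem_insert_of_mem _ (Set.mem_insert_of_mem _ (Set.mem_insert_of_mem _ (Set.mem_insert_of_mem _ (Set.mem_insert_of_mem _ (Set.mem_insert_of_mem _ (Set.mem_insert_of_mem _ (Set.mem_insert_of_mem _ (Set.mem_insert_of_mem _ (Set.mem_insert_of_mem _ (Set.mem_insert_of_mem _ (Set.mem_insert_of_mem _ (Set.mem_insert_of_mem _ (Set.mem_insert_of_mem _ (Set.mem_insert_of_mem _ (Set.mem_insert_of_mem _ (Set.mem_insert_of_mem _ (Set.mem_insert_of_mem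 _ (Set.mem_insert_of_mem _ (Set.mem_insert_of_mem _ (Set.mem_insert_of_mem _ (Set.mem_insert_of_mem _ (Set.mem_insert_of_mem _ (Set.mem_insert_of_mem _ (Set.mem_insert_of_mem _ (Set.mem_insert_of_mem _ (Set.mem_insert_of_mem _ (Set.mem_insert_of_mem _ (Set.mem_insert_of_mem _ (Set.mem_insert_of_mem _ (Set.mem_insert_of_mem _ (Set.mem_insert_of_mem _ (Set.mem_insert_of_mem _ (Set.mem_insert_of_mem _ (Set.mem_insert_of_mem _ (Set.mem_insert _ _)))))))))))))))))))))))))))))))))))))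

private lemma hTsq : t ^ 2 * (d12 * dm2m1 * (a1 ^ 2)⁻¹ * (a2 ^ 2)⁻¹)⁻¹ = (1 : W) := mkrel mem37

private lemma mem38 : T * A1 * T⁻¹ * A2⁻¹ ∈ rels := by
  unfold rels; exact Set.mem_insert_of_mem _ (Set.mem_insert_of_mem _ (Set.mem_insert_of_mem _ (Set.mem_insert_of_mem _ (Set.mem_insert_of_mem _ (Set.mem_insert_of_mem _ (Set.mem_insert_of_mem _ (Set.mem_insert_of_mem _ (Set.mem_insert_of_mem _ (Set.mem_insert_of_mem _ (Set.mem_insert_of_mem _ (Set.mem_insert_of_mem _ (Set.mem_insert_of_mem _ (Set.mem_insert_of_mem _ (Set.mem_insert_of_mem _ (Set.mem_insert_of_mem _ (Set.mem_insert_of_mem _ (Set.mem_insert_of_mem _ (Set.mem_insert_of_mem _ (Set.mem_insert_of_mem _ (Set.mem_insert_of_mem _ (Set.mem_insert_of_mem _ (Set.mem_insert_of_mem _ (Set.mem_insert_of_mem _ (Set.mem_insert_of_mem _ (Set.mem_insert_of_mem _ (Set.mem_insert_of_mem _ (Set.mem_insert_of_mem _ (Set.mem_insert_of_mem _ (Set.mem_insert_of_mem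 _ (Set.mem_insert_of_mem _ (Set.mem_insert_of_mem _ (Set.mem_insert_of_mem _ (Set.mem_insert_of_mem _ (Set.mem_insert_of_mem _ (Set.mem_insert_of_mem _ (Set.mem_insert_of_mem _ (Set.mem_insert_of_mem _ (Set.mem_insert _ _))))))))))))))))))))))))))))))))))))))

private lemma hTA1 : t * a1 * t⁻¹ * a2⁻¹ = (1 : W) := mkrel mem38

private lemma mem41 : T * D12 * (D12 * T)⁻¹ ∈ rels := by
  unfold rels; exact Set.mem_insert_of_mem _ (Set.mem_insert_of_mem _ (Set.mem_insert_of_mem _ (Set.mem_insert_of_mem _ (Set.mem_insert_of_mem _ (Set.mem_insert_of_mem _ (Set.mem_insert_of_mem _ (Set.mem_insert_of_mem _ (Set.mem_insert_of_mem _ (Set.mem_insert_of_mem _ (Set.mem_insert_of_mem _ (Set.mem_insert_of_mem _ (Set.mem_insert_of_mem _ (Set.mem_insert_of_mem _ (Set.mem_insert_of_mem _ (Set.mem_insert_of_mem _ (Set.mem_insert_of_mem _ (Set.mem_insert_of_mem _ (Set.mem_insert_of_mem _ (Set.mem_insert_of_mem _ (Set.mem_insert_of_mem _ (Set.mem_insert_of_mem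 _ (Set.mem_insert_of_mem _ (Set.mem_insert_of_mem _ (Set.mem_insert_of_mem _ (Set.mem_insert_of_mem _ (Set.mem_insert_of_mem _ (Set.mem_insert_of_mem _ (Set.mem_insert_of_mem _ (Set.mem_insert_of_mem _ (Set.mem_insert_of_mem _ (Set.mem_insert_of_mem _ (Set.mem_insert_of_mem _ (Set.mem_insert_of_mem _ (Set.mem_insert_of_mem _ (Set.mem_insert_of_mem _ (Set.mem_insert_of_mem _ (Set.mem_insert_of_mem _ (Set.mem_insert_of_mem _ (Set.mem_insert_of_mem _ (Set.mem_insert_of_mem _ (Set.mem_insert _ _)))))))))))))))))))))))))))))))))))))))))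

private lemma hTD : t * d12 * (d12 * t)⁻¹ = (1 : W) := mkrel mem41

private lemma mem44 : R ^ 2 * ((A2 ^ 4)⁻¹ * O2 * D12 * O2 * D12⁻¹)⁻¹ ∈ rels := by
  unfold rels; exact Set.mem_insert_of_mem _ (Set.mem_insert_of_mem _ (Set.mem_insert_of_mem _ (Set.mem_insert_of_mem _ (Set.mem_insert_of_mem _ (Set.mem_insert_of_mem _ (Set.mem_insert_of_mem _ (Set.mem_insert_of_mem _ (Set.mem_insert_of_mem _ (Set.mem_insert_of_mem _ (Set.mem_insert_of_mem _ (Set.mem_insert_of_mem _ (Set.mem_insert_of_mem _ (Set.mem_insert_of_mem _ (Set.mem_insert_of_mem _ (Set.mem_insert_of_mem _ (Set.mem_insert_of_mem _ (Set.mem_insert_of_mem _ (Set.mem_insert_of_mem _ (Set.mem_insert_of_mem _ (Set.mem_insert_of_mem _ (Set.mem_insert_of_mem _ (Set.mem_insert_of_mem _ (Set.mem_insert_of_mem _ (Set.mem_insert_of_mem _ (Set.mem_insert_of_mem _ (Set.mem_insert_of_mem _ (Set.mem_insert_of_mem _ (Set.mem_insert_of_mem _ (Set.mem_insert_of_mem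 _ (Set.mem_insert_of_mem _ (Set.mem_insert_of_mem _ (Set.mem_insert_of_mem _ (Set.mem_insert_of_mem _ (Set.mem_insert_of_mem _ (Set.mem_insert_of_mem _ (Set.mem_insert_of_mem _ (Set.mem_insert_of_mem _ (Set.mem_insert_of_mem _ (Set.mem_insert_of_mem _ (Set.mem_insert_of_mem _ (Set.mem_insert_of_mem _ (Set.mem_insert_of_mem _ (Set.mem_insert_of_mem _ (Set.mem_insert _ _))))))))))))))))))))))))))))))))))))))))))))

private lemma hP9 : r ^ 2 * ((a2 ^ 4)⁻¹ * o2 * d12 * o2 * d12⁻¹)⁻¹ = (1 : W) := mkrel mem44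

end Wajnryb

/-- The rewritten relation (P9)' of the reduction: in Wajnryb's presentation of the
genus-2 handlebody group, `r² = d₁₂⁻² a₁² a₂⁻²`. -/
theorem Wajnryb.r_sq_eq :
    Wajnryb.r ^ 2 = (Wajnryb.d12 ^ 2)⁻¹ * Wajnryb.a1 ^ 2 * (Wajnryb.a2 ^ 2)⁻¹ := by
  -- equations from the relators
  have hca1 : t * a1 * t⁻¹ = a2 := mul_inv_eq_one.mp hTA1
  have cTD : Commute t d12 := mul_inv_eq_one.mp hTD
  have cA12 : Commute a1 a2 := mul_inv_eq_one.mp hA12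
  have cA1D : Commute a1 d12 := mul_inv_eq_one.mp hA1D
  have cA2D : Commute a2 d12 := mul_inv_eq_one.mp hA2D
  have cA1Dm : Commute a1 dm2m1 := mul_inv_eq_one.mp hA1Dm
  have cA2Dm : Commute a2 dm2m1 := mul_inv_eq_one.mp hA2Dm
  have hOsq' : o ^ 2 = dm11 := mul_inv_eq_one.mp hOsq
  have hTsq' : t ^ 2 = d12 * dm2m1 * (a1 ^ 2)⁻¹ * (a2 ^ 2)⁻¹ := mul_inv_eq_one.mp hTsq
  have hD3' : o⁻¹ * d12 * o = dm12 := mul_inv_eq_one.mp hD3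
  have hP41' : dm11 * dm12 * d12 = a1 ^ 2 * a2 ^ 2 := mul_inv_eq_one.mp hP41
  have ho2 : o2 = t * d12⁻¹ * o * (t * d12⁻¹)⁻¹ := mul_inv_eq_one.mp hD5
  have hP9' : r ^ 2 = (a2 ^ 4)⁻¹ * o2 * d12 * o2 * d12⁻¹ := mul_inv_eq_one.mp hP9
  -- t conjugates a2 to a1
  have cT2 : Commute a1 (t ^ 2) := by
    rw [hTsq']
    exact ((cA1D.mul_right cA1Dm).mul_right
      ((Commute.refl a1).pow_right 2).inv_right).mul_right ((cA12.pow_right 2).inv_right)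
  have cT2' : a1 * (t * t) = (t * t) * a1 := by
    have h := cT2.eq; rwa [pow_two] at h
  have hca2 : t * a2 * t⁻¹ = a1 := by
    calc t * a2 * t⁻¹ = t * (t * a1 * t⁻¹) * t⁻¹ := by rw [hca1]
      _ = (t * t) * a1 * (t⁻¹ * t⁻¹) := by group
      _ = a1 * (t * t) * (t⁻¹ * t⁻¹) := by rw [← cT2']
      _ = a1 := by group
  have hcd : t * d12 * t⁻¹ = d12 := by rw [cTD.eq]; group
  -- o2 in a convenient form
  have ho2n : o2 = d12⁻¹ * t * o * t⁻¹ * d12 := by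
    rw [ho2, cTD.inv_right.eq]; group
  -- o * d12 * o
  have hodo : o * d12 * o = a1 ^ 2 * a2 ^ 2 * d12⁻¹ := by
    calc o * d12 * o = o ^ 2 * (o⁻¹ * d12 * o) := by group
      _ = dm11 * dm12 := by rw [hOsq', hD3']
      _ = a1 ^ 2 * a2 ^ 2 * d12⁻¹ := by rw [← hP41']; group
  -- conjugation by t
  have hconj : t * (a1 ^ 2 * a2 ^ 2 * d12⁻¹) * t⁻¹ = a2 ^ 2 * a1 ^ 2 * d12⁻¹ := by
    calc t * (a1 ^ 2 * a2 ^ 2 * d12⁻¹) * t⁻¹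
        = (t * a1 * t⁻¹) * (t * a1 * t⁻¹) * (t * a2 * t⁻¹) * (t * a2 * t⁻¹) *
            (t * d12 * t⁻¹)⁻¹ := by rw [pow_two a1, pow_two a2]; group
      _ = a2 * a2 * (a1 * a1) * d12⁻¹ := by rw [hca1, hca2, hcd]; group
      _ = a2 ^ 2 * a1 ^ 2 * d12⁻¹ := by rw [pow_two a2, pow_two a1]
  -- the key product
  have key : o2 * d12 * o2 * d12⁻¹ = d12⁻¹ * (a2 ^ 2 * a1 ^ 2 * d12⁻¹) := by
    calc o2 * d12 * o2 * d12⁻¹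
        = d12⁻¹ * t * o * (t⁻¹ * d12 * t) * o * t⁻¹ := by rw [ho2n]; group
      _ = d12⁻¹ * t * o * d12 * o * t⁻¹ := by
          rw [show t⁻¹ * d12 * t = d12 by rw [cTD.inv_left.eq]; group]
      _ = d12⁻¹ * (t * (o * d12 * o) * t⁻¹) := by group
      _ = d12⁻¹ * (t * (a1 ^ 2 * a2 ^ 2 * d12⁻¹) * t⁻¹) := by rw [hodo]
      _ = d12⁻¹ * (a2 ^ 2 * a1 ^ 2 * d12⁻¹) := by rw [hconj]
  -- final commuting shuffle
  have c1 : Commute d12⁻¹ (a2 ^ 2) := (cA2D.symm.pow_right 2).inv_left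
  have c2 : Commute (a1 ^ 2) d12⁻¹ := (cA1D.pow_left 2).inv_right
  have c3 : Commute ((a2 ^ 2)⁻¹) ((d12 ^ 2)⁻¹ * a1 ^ 2) :=
    (((cA2D.pow_left 2).pow_right 2).inv_right.mul_right
      ((cA12.symm.pow_left 2).pow_right 2)).inv_left
  calc r ^ 2 = (a2 ^ 4)⁻¹ * (o2 * d12 * o2 * d12⁻¹) := by rw [hP9']; group
    _ = (a2 ^ 4)⁻¹ * (d12⁻¹ * (a2 ^ 2 * a1 ^ 2 * d12⁻¹)) := by rw [key]
    _ = (a2 ^ 4)⁻¹ * (d12⁻¹ * a2 ^ 2) * (a1 ^ 2 * d12⁻¹) := by group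
    _ = (a2 ^ 4)⁻¹ * (a2 ^ 2 * d12⁻¹) * (d12⁻¹ * a1 ^ 2) := by rw [c1.eq, c2.eq]
    _ = (a2 ^ 2)⁻¹ * ((d12 ^ 2)⁻¹ * a1 ^ 2) := by group
    _ = ((d12 ^ 2)⁻¹ * a1 ^ 2) * (a2 ^ 2)⁻¹ := by rw [c3.eq]
    _ = (d12 ^ 2)⁻¹ * a1 ^ 2 * (a2 ^ 2)⁻¹ := by group
end

section
/- Under the substitutions coming from relations (P3)–(P4.4), the pure braid relation (P2.1) of Wajnryb's presentation becomes a consequence of the commuting relations: u⁻¹(cu⁻¹v⁻¹)u = (cu⁻¹v⁻¹)v(cu⁻¹v⁻¹)v⁻¹(cu⁻¹v⁻¹)⁻¹. -/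
private lemma braid_aux {G : Type*} [Group G] (c u v : G)
    (hcu : c * u = u * c) (hcv : c * v = v * c) :
    u⁻¹ * (c * u⁻¹ * v⁻¹) * u =
      (c * u⁻¹ * v⁻¹) * v * (c * u⁻¹ * v⁻¹) * v⁻¹ * (c * u⁻¹ * v⁻¹)⁻¹ := by
  have Hu : Commute c u := hcu
  have Hv : Commute c v := hcv
  have r1 : ∀ x : G, u⁻¹ * (c * x) = c * (u⁻¹ * x) := fun x => by
    rw [← mul_assoc, ← mul_assoc, ← Hu.inv_right.eq]
  have r2 : ∀ x : G, v⁻¹ * (c * x) = c * (v⁻¹ * x) := fun x => by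
    rw [← mul_assoc, ← mul_assoc, ← Hv.inv_right.eq]
  have r3 : ∀ x : G, v * (c * x) = c * (v * x) := fun x => by
    rw [← mul_assoc, ← mul_assoc, ← Hv.eq]
  have r4 : ∀ x : G, u⁻¹ * (c⁻¹ * x) = c⁻¹ * (u⁻¹ * x) := fun x => by
    rw [← mul_assoc, ← mul_assoc, ← Hu.inv_inv.eq]
  have r5 : ∀ x : G, v⁻¹ * (c⁻¹ * x) = c⁻¹ * (v⁻¹ * x) := fun x => by
    rw [← mul_assoc, ← mul_assoc, ← Hv.inv_inv.eq]
  have r6 : u * c⁻¹ = c⁻¹ * u := Hu.inv_left.eq.symm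
  simp only [mul_inv_rev, inv_inv, mul_assoc, r6, r1, r2, r3, r4, r5,
    inv_mul_cancel_left, mul_inv_cancel_left]

/-- Under the substitutions from (P3)–(P4.4), the pure braid relation (P2.1) becomes a consequence of the commuting relations. -/
theorem braid_P2_1 {G : Type*} [Group G] (a1 a2 u v : G)
    (h12 : a1 * a2 = a2 * a1)
    (h1u : a1 * u = u * a1) (h1v : a1 * v = v * a1)
    (h2u : a2 * u = u * a2) (h2v : a2 * v = v * a2) :
    u⁻¹ * (a1 ^ 2 * a2 ^ 2 * u⁻¹ * v⁻¹) * u =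
      (a1 ^ 2 * a2 ^ 2 * u⁻¹ * v⁻¹) * v * (a1 ^ 2 * a2 ^ 2 * u⁻¹ * v⁻¹) * v⁻¹ * (a1 ^ 2 * a2 ^ 2 * u⁻¹ * v⁻¹)⁻¹ := by
  have hcu : Commute (a1 ^ 2 * a2 ^ 2) u :=
    (((show Commute a1 u from h1u).pow_left 2)).mul_left ((show Commute a2 u from h2u).pow_left 2)
  have hcv : Commute (a1 ^ 2 * a2 ^ 2) v :=
    (((show Commute a1 v from h1v).pow_left 2)).mul_left ((show Commute a2 v from h2v).pow_left 2)
  exact braid_aux (a1 ^ 2 * a2 ^ 2) u v hcu.eq hcv.eq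
end

section
/- Under the substitutions coming from relations (P3)–(P4.4), the pure braid relation (P2.8) of Wajnryb's presentation becomes a consequence of the commuting relations: v⁻¹(cv⁻¹u⁻¹)v = (cv⁻¹u⁻¹)u(cv⁻¹u⁻¹)u⁻¹(cv⁻¹u⁻¹)⁻¹. -/
/-- Under the substitutions from (P3)–(P4.4), the pure braid relation (P2.8) becomes a consequence of the commuting relations. -/
theorem braid_P2_8 {G : Type*} [Group G] (a1 a2 u v : G)
    (h12 : a1 * a2 = a2 * a1)
    (h1u : a1 * u = u * a1) (h1v : a1 * v = v * a1)
    (h2u : a2 * u = u * a2) (h2v : a2 * v = v * a2) :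
    v⁻¹ * (a1 ^ 2 * a2 ^ 2 * v⁻¹ * u⁻¹) * v =
      (a1 ^ 2 * a2 ^ 2 * v⁻¹ * u⁻¹) * u * (a1 ^ 2 * a2 ^ 2 * v⁻¹ * u⁻¹) * u⁻¹ * (a1 ^ 2 * a2 ^ 2 * v⁻¹ * u⁻¹)⁻¹ := by
  have c1u : Commute a1 u := h1u
  have c1v : Commute a1 v := h1v
  have c2u : Commute a2 u := h2u
  have c2v : Commute a2 v := h2v
  have hcu : Commute (a1 ^ 2 * a2 ^ 2) u := (c1u.pow_left 2).mul_left (c2u.pow_left 2)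
  have hcv : Commute (a1 ^ 2 * a2 ^ 2) v := (c1v.pow_left 2).mul_left (c2v.pow_left 2)
  set c := a1 ^ 2 * a2 ^ 2 with hc
  have h1 : c * u = u * c := hcu
  have h2 : c * v = v * c := hcv
  have h3 : c * u⁻¹ = u⁻¹ * c := hcu.inv_right
  have h4 : c * v⁻¹ = v⁻¹ * c := hcv.inv_right
  have h5 : c⁻¹ * u = u * c⁻¹ := hcu.inv_left
  have h6 : c⁻¹ * v = v * c⁻¹ := hcv.inv_left
  have h7 : c⁻¹ * u⁻¹ = u⁻¹ * c⁻¹ := (hcu.inv_left).inv_right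
  have h8 : c⁻¹ * v⁻¹ = v⁻¹ * c⁻¹ := (hcv.inv_left).inv_right
  have h1' : ∀ x : G, c * (u * x) = u * (c * x) := fun x => by rw [← mul_assoc, h1, mul_assoc]
  have h2' : ∀ x : G, c * (v * x) = v * (c * x) := fun x => by rw [← mul_assoc, h2, mul_assoc]
  have h3' : ∀ x : G, c * (u⁻¹ * x) = u⁻¹ * (c * x) := fun x => by rw [← mul_assoc, h3, mul_assoc]
  have h4' : ∀ x : G, c * (v⁻¹ * x) = v⁻¹ * (c * x) := fun x => by rw [← mul_assoc, h4, mul_assoc]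
  have h5' : ∀ x : G, c⁻¹ * (u * x) = u * (c⁻¹ * x) := fun x => by rw [← mul_assoc, h5, mul_assoc]
  have h6' : ∀ x : G, c⁻¹ * (v * x) = v * (c⁻¹ * x) := fun x => by rw [← mul_assoc, h6, mul_assoc]
  have h7' : ∀ x : G, c⁻¹ * (u⁻¹ * x) = u⁻¹ * (c⁻¹ * x) := fun x => by rw [← mul_assoc, h7, mul_assoc]
  have h8' : ∀ x : G, c⁻¹ * (v⁻¹ * x) = v⁻¹ * (c⁻¹ * x) := fun x => by rw [← mul_assoc, h8, mul_assoc]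
  simp only [mul_inv_rev, mul_assoc, inv_inv, h1, h2, h3, h4, h5, h6, h7, h8,
    h1', h2', h3', h4', h5', h6', h7', h8',
    inv_mul_cancel_left, mul_inv_cancel_left, inv_mul_cancel, mul_inv_cancel, mul_one]
end

section
/- Let G be a group and let o, t, d, a₁, a₂ ∈ G be elements such that oto commutes with d, i.e. (oto)d = d(oto). Then t⁻¹o⁻¹dot = a₁²a₂²d⁻¹o⁻² holds if and only if odod = a₁²a₂² holds. (This is the paper's equivalence of the translated relation (D2) with the relation (D2)' of the simplified presentation.) -/
/-- Given that `oto` commutes with `d`, the translated relation (D2),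
`t⁻¹o⁻¹dot = a₁²a₂²d⁻¹o⁻²`, holds if and only if the relation (D2)',
`odod = a₁²a₂²`, holds. -/
theorem translated_D2_iff_D2' {G : Type*} [Group G] (o t d a1 a2 : G)
    (h : (o * t * o) * d = d * (o * t * o)) :
    t⁻¹ * o⁻¹ * d * o * t = a1 ^ 2 * a2 ^ 2 * d⁻¹ * o⁻¹ ^ 2 ↔
      o * d * o * d = a1 ^ 2 * a2 ^ 2 := by
  have h' : (o * t * o)⁻¹ * d * (o * t * o) = d := by
    rw [mul_assoc, ← h]; group
  have key : t⁻¹ * o⁻¹ * d * o * t = o * d * o⁻¹ := by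
    calc t⁻¹ * o⁻¹ * d * o * t
        = o * ((o * t * o)⁻¹ * d * (o * t * o)) * o⁻¹ := by group
      _ = o * d * o⁻¹ := by rw [h']
  rw [key, ← mul_left_inj (o ^ 2 * d)]
  have e1 : o * d * o⁻¹ * (o ^ 2 * d) = o * d * o * d := by group
  have e2 : a1 ^ 2 * a2 ^ 2 * d⁻¹ * o⁻¹ ^ 2 * (o ^ 2 * d) = a1 ^ 2 * a2 ^ 2 := by group
  rw [e1, e2]
end

section
/- Let G be a group and let r, d, a₁, a₂ ∈ G be elements such that a₁ and a₂ commute with each other and with d, r² = d⁻²a₁²a₂⁻², and rdr⁻¹ = a₂. Then ra₂r⁻¹ = d. (This is the paper's proof that the first part of relation (P10a) is redundant given (P10f)' and the rewritten (P9)'.) -/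
/-- The first part of relation (P10a) is redundant: given (P10f)' (`rdr⁻¹ = a₂`) and
the rewritten (P9)' (`r² = d⁻²a₁²a₂⁻²`), one gets `ra₂r⁻¹ = d`. -/
theorem P10a_redundant {G : Type*} [Group G] (r d a1 a2 : G)
    (h12 : a1 * a2 = a2 * a1)
    (h1d : a1 * d = d * a1) (h2d : a2 * d = d * a2)
    (hr2 : r ^ 2 = (d ^ 2)⁻¹ * a1 ^ 2 * (a2 ^ 2)⁻¹)
    (hrd : r * d * r⁻¹ = a2) :
    r * a2 * r⁻¹ = d := by
  have hc : Commute ((d ^ 2)⁻¹ * a1 ^ 2 * (a2 ^ 2)⁻¹) d := by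
    have c1 : Commute a1 d := h1d
    have c2 : Commute a2 d := h2d
    exact (((Commute.refl d).pow_left 2).inv_left.mul_left (c1.pow_left 2)).mul_left
      ((c2.pow_left 2).inv_left)
  calc r * a2 * r⁻¹ = r ^ 2 * d * (r ^ 2)⁻¹ := by rw [← hrd, sq]; group
    _ = d := by rw [hr2, hc.eq, mul_inv_cancel_right]
end
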